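/- Threshold for connectivity in the Erdős–Rényi graph: suppose p_n = (log n + c_n)/n with 0 < p_n < 1. (i) If lim_{n→∞} c_n = +∞, then lim_{n→∞} P_n(G(n, p_n) is connected) = 1. (ii) If lim_{n→∞} c_n = −∞, then lim_{n→∞} P_n(G(n, p_n) is connected) = 0. -/

import Mathlib

open MeasureTheory Filter

/-- The index set of potential edges: unordered pairs of distinct vertices of `{1,...,n}`. -/
abbrev EdgeIdx (n : ℕ) := {e : Sym2 (Fin n) // ¬ e.IsDiag}

/-- The Bernoulli(`p`) measure on `Bool`: mass `p` at `true` and `1-p` at `false`. -/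
noncomputable def bernoulliBool (p : ℝ) : Measure Bool :=
  ENNReal.ofReal p • Measure.dirac true + ENNReal.ofReal (1 - p) • Measure.dirac false

/-- The Erdős–Rényi measure `G(n,p)`: the product, over all unordered pairs of distinct
vertices, of Bernoulli(`p`) measures on `{0,1}` (here `Bool`). -/
noncomputable def erMeasure (n : ℕ) (p : ℝ) : Measure (EdgeIdx n → Bool) :=
  Measure.pi fun _ => bernoulliBool p

/-- The simple graph on `{1,...,n}` determined by the edge-indicator configuration `ω`:
a pair `{i,j}` of distinct vertices is an edge exactly when its coordinate is `true`. -/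
def erGraph (n : ℕ) (ω : EdgeIdx n → Bool) : SimpleGraph (Fin n) where
  Adj i j := ∃ h : ¬ (s(i, j) : Sym2 (Fin n)).IsDiag, ω ⟨s(i, j), h⟩ = true
  symm := by
    constructor
    intro i j hadj
    obtain ⟨h, hw⟩ := hadj
    have hswap : (s(i, j) : Sym2 (Fin n)) = s(j, i) := Sym2.eq_swap
    refine ⟨hswap ▸ h, ?_⟩
    have he : (⟨s(j, i), hswap ▸ h⟩ : EdgeIdx n) = ⟨s(i, j), h⟩ := Subtype.ext hswap.symm
    rw [he]
    exact hw
  loopless := by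
    constructor
    intro i hadj
    obtain ⟨h, _⟩ := hadj
    exact h (Sym2.mk_isDiag_iff.mpr rfl)

/-! If the graph is disconnected, some vertex set `S` with `1 ≤ |S| ≤ n/2` has no edge leaving
it, an event of probability `(1-p)^(|S|(n-|S|))`. With `p = (log n + c)/n` the union bound over
such `S` is at most `∑_k (e n/k)^k e^{-k(1 - k/n)(log n + c)} ≤ ∑_k e^{k(2 - c/2)}`, which tends
to `0` when `c → ∞`.

Conversely a connected graph on at least two vertices has no isolated vertex. The events
`A_i = {vertex i is isolated}` have probability `q^(n-1)`, `q = 1 - p`, and pairwise intersections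
of probability at most `q^(2(n-2))`, so the second moment (Chung–Erdős) inequality
`(∑ P(A_i))² ≤ P(⋃ A_i) ∑_{i,j} P(A_i ∩ A_j)` gives `P(⋃ A_i) ≥ (1/a + 1/q²)⁻¹` with
`a = n q^(n-1) ≥ exp(-c - n p²/q)`. When `c → -∞` this tends to `1`. -/

open Finset Real
open scoped Topology

lemma isProbabilityMeasure_bernoulliBool {p : ℝ} (h0 : 0 ≤ p) (h1 : p ≤ 1) :
    IsProbabilityMeasure (bernoulliBool p) :=
  ⟨by simp [bernoulliBool, ← ENNReal.ofReal_add h0 (sub_nonneg.2 h1)]⟩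

lemma measureReal_pi_bernoulliBool_forall_false {ι : Type*} [Fintype ι] {p : ℝ}
    (h0 : 0 ≤ p) (h1 : p ≤ 1) (E : Finset ι) :
    (Measure.pi fun _ : ι => bernoulliBool p).real {ω | ∀ i ∈ E, ω i = false} = (1 - p) ^ #E := by
  have := isProbabilityMeasure_bernoulliBool h0 h1
  have hset : {ω : ι → Bool | ∀ i ∈ E, ω i = false} = (E : Set ι).pi fun _ => {false} := by
    ext ω; simp
  rw [hset, measureReal_def, Measure.pi_pi_finset, prod_const]
  simp [bernoulliBool, ENNReal.toReal_ofReal (sub_nonneg.2 h1)]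

lemma isProbabilityMeasure_erMeasure {n : ℕ} {p : ℝ} (h0 : 0 ≤ p) (h1 : p ≤ 1) :
    IsProbabilityMeasure (erMeasure n p) :=
  have := isProbabilityMeasure_bernoulliBool h0 h1
  Measure.pi.instIsProbabilityMeasure _

lemma measureReal_eq_sum_indicator {Ω : Type*} [Fintype Ω] [MeasurableSpace Ω]
    [MeasurableSingletonClass Ω] (μ : Measure Ω) [IsFiniteMeasure μ] (s : Set Ω) :
    μ.real s = ∑ ω, μ.real {ω} * s.indicator 1 ω := by
  rw [← integral_indicator_one s.toFinite.measurableSet, integral_fintype Integrable.of_finite]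
  rfl

-- The Chung–Erdős inequality: Cauchy–Schwarz for `N = ∑ i, 1_{A i}`, which vanishes off the union.
lemma sq_sum_measureReal_le_measureReal_biUnion_mul {Ω ι : Type*} [Fintype Ω] [MeasurableSpace Ω]
    [MeasurableSingletonClass Ω] (μ : Measure Ω) [IsFiniteMeasure μ] (t : Finset ι)
    (A : ι → Set Ω) :
    (∑ i ∈ t, μ.real (A i)) ^ 2
      ≤ μ.real (⋃ i ∈ t, A i) * ∑ i ∈ t, ∑ j ∈ t, μ.real (A i ∩ A j) := by
  let N : Ω → ℝ := fun ω => ∑ i ∈ t, (A i).indicator 1 ω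
  have hfirst : ∑ i ∈ t, μ.real (A i) = ∑ ω, μ.real {ω} * N ω := by
    rw [sum_congr rfl fun i _ => measureReal_eq_sum_indicator μ (A i), sum_comm]
    simp_rw [N, mul_sum]
  have hsecond : ∑ i ∈ t, ∑ j ∈ t, μ.real (A i ∩ A j) = ∑ ω, μ.real {ω} * N ω ^ 2 := by
    rw [sum_congr rfl fun i _ => sum_congr rfl fun j _ => measureReal_eq_sum_indicator μ _]
    simp_rw [N, sq, sum_mul_sum, mul_sum, Set.inter_indicator_one, Pi.mul_apply]
    symm
    rw [sum_comm]
    exact sum_congr rfl fun i _ => sum_comm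
  have hN : ∀ ω ∉ ⋃ i ∈ t, A i, N ω = 0 := fun ω hω =>
    sum_eq_zero fun i hi => Set.indicator_of_notMem (fun h => hω (Set.mem_biUnion hi h)) _
  rw [hfirst, hsecond, measureReal_eq_sum_indicator μ (⋃ i ∈ t, A i)]
  refine sum_sq_le_sum_mul_sum_of_sq_le_mul _ (fun ω _ => ?_) (fun ω _ => ?_) (fun ω _ => ?_)
  · exact mul_nonneg measureReal_nonneg (Set.indicator_nonneg (fun _ _ => zero_le_one) _)
  · exact mul_nonneg measureReal_nonneg (sq_nonneg _)
  · by_cases hω : ω ∈ ⋃ i ∈ t, A i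
    · rw [Set.indicator_of_mem hω, Pi.one_apply]
      exact le_of_eq (by ring)
    · rw [hN ω hω]; simp

lemma SimpleGraph.exists_small_isolated_finset_of_not_connected {V : Type*} [Fintype V] [Nonempty V]
    (G : SimpleGraph V) (h : ¬ G.Connected) :
    ∃ S : Finset V, S.Nonempty ∧ 2 * #S ≤ Fintype.card V ∧ ∀ i ∈ S, ∀ j ∉ S, ¬ G.Adj i j := by
  classical
  obtain ⟨u, v, huv⟩ : ∃ u v, ¬ G.Reachable u v := by
    by_contra! hr
    exact h ⟨hr⟩
  let T : Finset V := univ.filter (G.Reachable u)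
  have hT : ∀ i ∈ T, ∀ j ∉ T, ¬ G.Adj i j := fun i hi j hj hij =>
    hj (mem_filter.2 ⟨mem_univ j, (mem_filter.1 hi).2.trans hij.reachable⟩)
  by_cases hsmall : 2 * #T ≤ Fintype.card V
  · exact ⟨T, ⟨u, mem_filter.2 ⟨mem_univ u, .rfl⟩⟩, hsmall, hT⟩
  · refine ⟨Tᶜ, ⟨v, by simpa [T] using huv⟩, by rw [card_compl]; omega, ?_⟩
    intro i hi j hj hij
    exact hT j (by simpa using hj) i (mem_compl.1 hi) hij.symm

variable {n : ℕ}

def boundaryEdges (S : Finset (Fin n)) : Finset (EdgeIdx n) :=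
  univ.filter fun e => ∃ i ∈ S, ∃ j ∉ S, e.1 = s(i, j)

def noBoundaryEdge (n : ℕ) (S : Finset (Fin n)) : Set (EdgeIdx n → Bool) :=
  {ω | ∀ i ∈ S, ∀ j ∉ S, ¬ (erGraph n ω).Adj i j}

lemma card_boundaryEdges (S : Finset (Fin n)) : #(boundaryEdges S) = #S * (n - #S) := by
  have himage : (boundaryEdges S).map (Function.Embedding.subtype _)
      = (S ×ˢ Sᶜ).image fun x => s(x.1, x.2) := by
    ext e
    simp only [boundaryEdges, Finset.mem_map, mem_filter, mem_univ, true_and, mem_image,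
      mem_product, mem_compl, Function.Embedding.coe_subtype, Prod.exists]
    constructor
    · rintro ⟨e, ⟨i, hi, j, hj, he⟩, rfl⟩
      exact ⟨i, j, ⟨hi, hj⟩, he.symm⟩
    · rintro ⟨i, j, ⟨hi, hj⟩, rfl⟩
      have hij : i ≠ j := fun h => hj (h ▸ hi)
      exact ⟨⟨s(i, j), Sym2.mk_isDiag_iff.not.2 hij⟩, ⟨i, hi, j, hj, rfl⟩, rfl⟩
  have hinj : Set.InjOn (fun x : Fin n × Fin n => s(x.1, x.2)) (S ×ˢ Sᶜ : Finset _) := by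
    rintro ⟨i, j⟩ hij ⟨i', j'⟩ hij' h
    simp only [coe_product, coe_compl, Set.mem_prod, mem_coe, Set.mem_compl_iff] at hij hij'
    rcases Sym2.eq_iff.1 h with ⟨rfl, rfl⟩ | ⟨rfl, rfl⟩
    · rfl
    · exact absurd hij.1 hij'.2
  rw [← card_map, himage, card_image_of_injOn hinj, card_product, card_compl, Fintype.card_fin]

lemma noBoundaryEdge_eq (S : Finset (Fin n)) :
    noBoundaryEdge n S = {ω | ∀ e ∈ boundaryEdges S, ω e = false} := by
  ext ω
  simp only [noBoundaryEdge, boundaryEdges, Set.mem_ofPred_eq, mem_filter, mem_univ, true_and]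
  constructor
  · rintro h ⟨e, he⟩ ⟨i, hi, j, hj, rfl⟩
    exact Bool.eq_false_iff.2 fun htrue => h i hi j hj ⟨he, htrue⟩
  · rintro h i hi j hj ⟨hd, htrue⟩
    simp [h ⟨s(i, j), hd⟩ ⟨i, hi, j, hj, rfl⟩] at htrue

lemma measureReal_noBoundaryEdge {p : ℝ} (h0 : 0 ≤ p) (h1 : p ≤ 1) (S : Finset (Fin n)) :
    (erMeasure n p).real (noBoundaryEdge n S) = (1 - p) ^ (#S * (n - #S)) := by
  rw [noBoundaryEdge_eq, erMeasure, measureReal_pi_bernoulliBool_forall_false h0 h1,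
    card_boundaryEdges]

lemma noBoundaryEdge_inter_subset (S T : Finset (Fin n)) :
    noBoundaryEdge n S ∩ noBoundaryEdge n T ⊆ noBoundaryEdge n (S ∪ T) := by
  rintro ω ⟨hS, hT⟩ i hi j hj
  rw [mem_union, not_or] at hj
  rcases mem_union.1 hi with hi | hi
  exacts [hS i hi j hj.1, hT i hi j hj.2]

lemma measureReal_not_connected_le {p : ℝ} (h0 : 0 ≤ p) (h1 : p ≤ 1) (hn : 1 ≤ n) :
    (erMeasure n p).real {ω | ¬ (erGraph n ω).Connected}
      ≤ ∑ k ∈ Icc 1 (n / 2), (n.choose k : ℝ) * (1 - p) ^ (k * (n - k)) := by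
  have := isProbabilityMeasure_erMeasure (n := n) h0 h1
  have : Nonempty (Fin n) := ⟨⟨0, hn⟩⟩
  have hsub : {ω | ¬ (erGraph n ω).Connected}
      ⊆ ⋃ k ∈ Icc 1 (n / 2), ⋃ S ∈ powersetCard k univ, noBoundaryEdge n S := by
    intro ω hω
    obtain ⟨S, hne, hsmall, hS⟩ := (erGraph n ω).exists_small_isolated_finset_of_not_connected hω
    simp only [Set.mem_iUnion, mem_Icc, mem_powersetCard_univ]
    rw [Fintype.card_fin] at hsmall
    exact ⟨#S, ⟨hne.card_pos, by omega⟩, S, rfl, hS⟩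
  calc _ ≤ _ := measureReal_mono hsub (measure_ne_top _ _)
    _ ≤ ∑ k ∈ Icc 1 (n / 2), ∑ S ∈ powersetCard k univ,
          (erMeasure n p).real (noBoundaryEdge n S) :=
      (measureReal_biUnion_finset_le _ _).trans
        (sum_le_sum fun k _ => measureReal_biUnion_finset_le _ _)
    _ = _ := sum_congr rfl fun k _ => by
      rw [sum_congr rfl fun S hS => by
        rw [measureReal_noBoundaryEdge h0 h1, mem_powersetCard_univ.1 hS]]
      simp [card_powersetCard]

lemma le_measureReal_biUnion_noBoundaryEdge_singleton {p : ℝ} (h0 : 0 ≤ p) (h1 : p < 1)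
    (hn : 2 ≤ n) :
    ((n * (1 - p) ^ (n - 1))⁻¹ + ((1 - p) ^ 2)⁻¹)⁻¹
      ≤ (erMeasure n p).real (⋃ i ∈ univ, noBoundaryEdge n {i}) := by
  have := isProbabilityMeasure_erMeasure (n := n) h0 h1.le
  set μ := erMeasure n p
  set q := 1 - p
  set a := n * q ^ (n - 1)
  have hq : 0 < q := sub_pos.2 h1
  have ha : 0 < a := by positivity
  let A : Fin n → Set (EdgeIdx n → Bool) := fun i => noBoundaryEdge n {i}
  have hA : ∀ i, μ.real (A i) = q ^ (n - 1) := fun i => by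
    simp [A, μ, q, measureReal_noBoundaryEdge h0 h1.le]
  have hAA : ∀ i j,
      μ.real (A i ∩ A j) ≤ (if i = j then q ^ (n - 1) else 0) + q ^ (2 * (n - 2)) := by
    intro i j
    by_cases hij : i = j
    · simpa [hij, hA] using pow_nonneg hq.le _
    · rw [if_neg hij, zero_add]
      refine (measureReal_mono (noBoundaryEdge_inter_subset _ _)).trans_eq ?_
      rw [measureReal_noBoundaryEdge h0 h1.le, card_union_of_disjoint (by simpa using hij)]
      simp [q]
  have hfirst : ∑ i, μ.real (A i) = a := by simp [hA, a]
  have hsecond : ∑ i, ∑ j, μ.real (A i ∩ A j) ≤ a + a ^ 2 / q ^ 2 := by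
    refine (sum_le_sum fun i _ => sum_le_sum fun j _ => hAA i j).trans_eq ?_
    have : a ^ 2 = n ^ 2 * q ^ (2 * (n - 2)) * q ^ 2 := by
      rw [mul_assoc, ← pow_add, show 2 * (n - 2) + 2 = (n - 1) * 2 by omega, pow_mul]; ring
    simp [sum_add_distrib, a, this, hq.ne']
    ring
  have hsq := sq_sum_measureReal_le_measureReal_biUnion_mul μ univ A
  rw [hfirst] at hsq
  have : a ^ 2 ≤ μ.real (⋃ i ∈ univ, A i) * (a ^ 2 * (a⁻¹ + (q ^ 2)⁻¹)) := by
    refine hsq.trans (mul_le_mul_of_nonneg_left (hsecond.trans_eq ?_) measureReal_nonneg)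
    field_simp
  rw [inv_le_iff_one_le_mul₀ (by positivity)]
  nlinarith [sq_pos_of_pos ha]

lemma measureReal_connected_le {p : ℝ} (h0 : 0 ≤ p) (h1 : p < 1) (hn : 2 ≤ n) :
    (erMeasure n p).real {ω | (erGraph n ω).Connected}
      ≤ 1 - ((n * (1 - p) ^ (n - 1))⁻¹ + ((1 - p) ^ 2)⁻¹)⁻¹ := by
  have := isProbabilityMeasure_erMeasure (n := n) h0 h1.le
  have : Nontrivial (Fin n) := Fin.nontrivial_iff_two_le.2 hn
  have hconn : {ω | (erGraph n ω).Connected} ⊆ (⋃ i ∈ univ, noBoundaryEdge n {i})ᶜ := by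
    intro ω hω hU
    obtain ⟨i, -, hi⟩ := Set.mem_iUnion₂.1 hU
    obtain ⟨j, hij⟩ := hω.preconnected.exists_adj_of_nontrivial i
    exact hi i (mem_singleton_self i) j (by simpa using hij.ne.symm) hij
  calc _ ≤ (erMeasure n p).real (⋃ i ∈ univ, noBoundaryEdge n {i})ᶜ := measureReal_mono hconn
    _ = 1 - (erMeasure n p).real (⋃ i ∈ univ, noBoundaryEdge n {i}) :=
      probReal_compl_eq_one_sub (Set.toFinite _).measurableSet
    _ ≤ _ := by linarith [le_measureReal_biUnion_noBoundaryEdge_singleton h0 h1 hn]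

lemma Nat.choose_le_exp_one_mul_div_pow (n k : ℕ) :
    (n.choose k : ℝ) ≤ (exp 1 * n / k) ^ k := by
  have hkk : 0 < (k : ℝ) ^ k := by
    rcases k with _ | k
    · simp
    · positivity
  have hfact : (k : ℝ) ^ k / k.factorial ≤ exp k := pow_div_factorial_le_exp (k : ℝ) k.cast_nonneg k
  rw [div_le_iff₀ (by positivity)] at hfact
  calc (n.choose k : ℝ) ≤ n ^ k / k.factorial := Nat.choose_le_pow_div k n
    _ ≤ (exp 1 * n / k) ^ k := by
      rw [div_pow, mul_pow, ← exp_nat_mul, mul_one, div_le_div_iff₀ (by positivity) hkk]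
      nlinarith [pow_nonneg (n.cast_nonneg : (0 : ℝ) ≤ n) k]

lemma choose_mul_one_sub_pow_le {n k : ℕ} {p c : ℝ} (hk : 1 ≤ k) (h2k : 2 * k ≤ n) (hc : 0 ≤ c)
    (hp : p = (log n + c) / n) (hp1 : p ≤ 1) :
    (n.choose k : ℝ) * (1 - p) ^ (k * (n - k)) ≤ exp (2 - c / 2) ^ k := by
  have hk0 : (0 : ℝ) < k := by exact_mod_cast hk
  have hn0 : (0 : ℝ) < n := by exact_mod_cast (by omega : 0 < n)
  have h2k' : 2 * (k : ℝ) ≤ n := by exact_mod_cast h2k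
  set x := (k : ℝ) / n
  have hx0 : 0 < x := by positivity
  have hx : x ≤ 1 / 2 := by rw [div_le_iff₀ hn0]; linarith
  have hlogk : 0 ≤ log k := log_nonneg (by exact_mod_cast hk)
  have hlogn : log n = log k + log (n / k) := by rw [log_div hn0.ne' hk0.ne']; ring
  -- `x log (1/x) ≤ 1 - x`, the entropy-type bound that pays for the factor `(e n / k) ^ k`
  have hentropy : x * log (n / k) ≤ 1 - x := by
    calc x * log (n / k) ≤ x * (n / k - 1) :=
          mul_le_mul_of_nonneg_left (log_le_sub_one_of_pos (by positivity)) hx0.le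
      _ = 1 - x := by simp only [x]; field_simp
  have hpnk : p * (n - k) = (log n + c) * (1 - x) := by rw [hp]; simp only [x]; field_simp
  have hexponent : 1 + log (n / k) - p * (n - k) ≤ 2 - c / 2 := by
    rw [hpnk, hlogn]
    nlinarith [mul_nonneg (by linarith : 0 ≤ 1 - x) hlogk,
      mul_nonneg (by linarith : 0 ≤ 1 / 2 - x) hc]
  have hq : (1 - p) ^ (k * (n - k)) ≤ exp (-(p * (n - k))) ^ k := by
    have hq1 : (1 - p) ^ (n - k) ≤ exp (-(p * (n - k))) :=
      calc (1 - p) ^ (n - k) ≤ exp (-p) ^ (n - k) :=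
            pow_le_pow_left₀ (by linarith) (by linarith [add_one_le_exp (-p)]) _
        _ = exp (-(p * (n - k))) := by rw [← exp_nat_mul, Nat.cast_sub (by omega)]; ring_nf
    rw [mul_comm k, pow_mul]
    exact pow_le_pow_left₀ (by positivity) hq1 k
  calc (n.choose k : ℝ) * (1 - p) ^ (k * (n - k))
      ≤ (exp 1 * n / k) ^ k * exp (-(p * (n - k))) ^ k :=
        mul_le_mul (Nat.choose_le_exp_one_mul_div_pow n k) hq (by positivity) (by positivity)
    _ = exp (1 + log (n / k) - p * (n - k)) ^ k := by
        rw [← mul_pow, exp_sub, exp_add, exp_log (by positivity), exp_neg]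
        ring
    _ ≤ exp (2 - c / 2) ^ k := pow_le_pow_left₀ (exp_pos _).le (exp_le_exp.2 hexponent) k

lemma sum_Icc_pow_le_two_mul {r : ℝ} (hr0 : 0 ≤ r) (hr : r ≤ 1 / 2) (m : ℕ) :
    ∑ k ∈ Icc 1 m, r ^ k ≤ 2 * r := by
  rw [← Finset.Ico_add_one_right_eq_Icc]
  refine (geom_sum_Ico_le_of_lt_one hr0 (by linarith)).trans ?_
  rw [pow_one, div_le_iff₀ (by linarith)]
  nlinarith [mul_nonneg hr0 (by linarith : 0 ≤ 1 - 2 * r)]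

lemma exp_neg_sub_le_mul_one_sub_pow {n : ℕ} {p c : ℝ} (hn : 1 ≤ n) (hp : p = (log n + c) / n)
    (h0 : 0 ≤ p) (h1 : p < 1) :
    exp (-c - n * p ^ 2 / (1 - p)) ≤ n * (1 - p) ^ (n - 1) := by
  have hq : 0 < 1 - p := sub_pos.2 h1
  have hn0 : (0 : ℝ) < n := by exact_mod_cast hn
  have hexp_le : exp (-(p / (1 - p))) ≤ 1 - p := by
    calc exp (-(p / (1 - p))) = exp (1 - (1 - p)⁻¹) := by congr 1; field_simp; ring
      _ ≤ exp (log (1 - p)) := exp_le_exp.2 (one_sub_inv_le_log_of_pos hq)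
      _ = 1 - p := exp_log hq
  have hexponent : -c - n * p ^ 2 / (1 - p) = log n + n * (-(p / (1 - p))) := by
    have hnp : n * p = log n + c := by rw [hp]; field_simp
    field_simp
    linear_combination (1 - p) * hnp
  rw [hexponent, exp_add, exp_log hn0, exp_nat_mul]
  gcongr
  calc exp (-(p / (1 - p))) ^ n ≤ (1 - p) ^ n := pow_le_pow_left₀ (exp_pos _).le hexp_le n
    _ ≤ (1 - p) ^ (n - 1) := pow_le_pow_of_le_one hq.le (by linarith) (by omega)

section Threshold

variable {p c : ℕ → ℝ}

lemma tendsto_measureReal_connected_of_tendsto_atTop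
    (hp : ∀ n : ℕ, 1 ≤ n → p n = (log n + c n) / n ∧ 0 < p n ∧ p n < 1)
    (hc : Tendsto c atTop atTop) :
    Tendsto (fun n => (erMeasure n (p n)).real {ω | (erGraph n ω).Connected}) atTop (𝓝 1) := by
  have hr : Tendsto (fun n => exp (2 - c n / 2)) atTop (𝓝 0) :=
    tendsto_exp_atBot.comp (tendsto_atBot_add_const_left _ 2
      (tendsto_neg_atTop_atBot.comp (hc.atTop_div_const two_pos)))
  have hdisc : Tendsto (fun n => (erMeasure n (p n)).real {ω | ¬ (erGraph n ω).Connected})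
      atTop (𝓝 0) := by
    refine squeeze_zero' (.of_forall fun n => measureReal_nonneg) ?_ (by simpa using hr.const_mul 2)
    filter_upwards [eventually_ge_atTop 1, hc.eventually_ge_atTop 0,
      hr.eventually_lt_const (by norm_num : (0 : ℝ) < 1 / 2)] with n hn hc0 hr2
    obtain ⟨hpn, hp0, hp1⟩ := hp n hn
    calc _ ≤ _ := measureReal_not_connected_le hp0.le hp1.le hn
      _ ≤ ∑ k ∈ Icc 1 (n / 2), exp (2 - c n / 2) ^ k := sum_le_sum fun k hk => by
          obtain ⟨hk1, hk2⟩ := mem_Icc.1 hk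
          exact choose_mul_one_sub_pow_le hk1 (by omega) hc0 hpn hp1.le
      _ ≤ 2 * exp (2 - c n / 2) := sum_Icc_pow_le_two_mul (exp_pos _).le hr2.le _
  refine (by simpa using tendsto_const_nhds.sub hdisc : Tendsto _ _ (𝓝 (1 : ℝ))).congr' ?_
  filter_upwards [eventually_ge_atTop 1] with n hn
  obtain ⟨-, hp0, hp1⟩ := hp n hn
  have := isProbabilityMeasure_erMeasure (n := n) hp0.le hp1.le
  rw [← probReal_compl_eq_one_sub (Set.toFinite _).measurableSet, Set.compl_ofPred]
  simp only [not_not]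

lemma tendsto_measureReal_connected_of_tendsto_atBot
    (hp : ∀ n : ℕ, 1 ≤ n → p n = (log n + c n) / n ∧ 0 < p n ∧ p n < 1)
    (hc : Tendsto c atTop atBot) :
    Tendsto (fun n => (erMeasure n (p n)).real {ω | (erGraph n ω).Connected}) atTop (𝓝 0) := by
  have hlog (k : ℕ) : Tendsto (fun n : ℕ => log n ^ k / n) atTop (𝓝 0) := by
    simpa [Function.comp_def] using (tendsto_pow_log_div_mul_add_atTop 1 0 k one_ne_zero).comp
      tendsto_natCast_atTop_atTop
  have hsmall : ∀ᶠ n : ℕ in atTop, 0 < p n ∧ p n ≤ log n / n := by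
    filter_upwards [eventually_ge_atTop 1, hc.eventually_le_atBot 0] with n hn hcn
    obtain ⟨hpn, hp0, -⟩ := hp n hn
    exact ⟨hp0, hpn ▸ div_le_div_of_nonneg_right (by linarith) n.cast_nonneg⟩
  have hp0 : Tendsto p atTop (𝓝 0) :=
    squeeze_zero' (hsmall.mono fun n h => h.1.le) (hsmall.mono fun n h => h.2)
      (by simpa using hlog 1)
  have hnp2 : Tendsto (fun n : ℕ => n * p n ^ 2) atTop (𝓝 0) := by
    refine squeeze_zero' (.of_forall fun n => by positivity) ?_ (hlog 2)
    filter_upwards [hsmall, eventually_ge_atTop 1] with n ⟨hpos, hle⟩ hn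
    calc (n : ℝ) * p n ^ 2 ≤ n * (log n / n) ^ 2 := by gcongr
      _ = log n ^ 2 / n := by field_simp
  have hq : Tendsto (fun n => 1 - p n) atTop (𝓝 1) := by simpa using tendsto_const_nhds.sub hp0
  have ha : Tendsto (fun n : ℕ => n * (1 - p n) ^ (n - 1)) atTop atTop := by
    refine tendsto_atTop_mono' _ ?_ (tendsto_exp_atTop.comp
      ((tendsto_neg_atBot_atTop.comp hc).atTop_add (by simpa using (hnp2.div hq one_ne_zero).neg)))
    filter_upwards [eventually_ge_atTop 1] with n hn
    obtain ⟨hpn, hp0, hp1⟩ := hp n hn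
    simpa [sub_eq_add_neg] using exp_neg_sub_le_mul_one_sub_pow hn hpn hp0.le hp1
  have hbound : Tendsto (fun n : ℕ => 1 - ((n * (1 - p n) ^ (n - 1))⁻¹ + ((1 - p n) ^ 2)⁻¹)⁻¹)
      atTop (𝓝 0) := by
    simpa using (tendsto_const_nhds (x := (1 : ℝ))).sub
      ((ha.inv_tendsto_atTop.add ((hq.pow 2).inv₀ (by norm_num))).inv₀ (by norm_num))
  refine squeeze_zero' (.of_forall fun n => measureReal_nonneg) ?_ hbound
  filter_upwards [eventually_ge_atTop 2] with n hn
  obtain ⟨-, hp0, hp1⟩ := hp n (by omega)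
  exact measureReal_connected_le hp0.le hp1 hn

end Threshold

/-- Threshold for connectivity of the Erdős–Rényi graph `G(n, pₙ)` with
`pₙ = (log n + cₙ)/n` and `0 < pₙ < 1`:
(i) if `cₙ → ∞` then `Pₙ(G(n,pₙ) is connected) → 1`;
(ii) if `cₙ → −∞` then `Pₙ(G(n,pₙ) is connected) → 0`. -/
theorem er_connectivity_threshold (p c : ℕ → ℝ)
    (hp : ∀ n : ℕ, 1 ≤ n → p n = (Real.log n + c n) / n ∧ 0 < p n ∧ p n < 1) :
    (Tendsto c atTop atTop →
      Tendsto (fun n : ℕ => (erMeasure n (p n) {ω | (erGraph n ω).Connected}).toReal)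
        atTop (nhds 1)) ∧
    (Tendsto c atTop atBot →
      Tendsto (fun n : ℕ => (erMeasure n (p n) {ω | (erGraph n ω).Connected}).toReal)
        atTop (nhds 0)) :=
  ⟨tendsto_measureReal_connected_of_tendsto_atTop hp,
    tendsto_measureReal_connected_of_tendsto_atBot hp⟩
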